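/- arXiv:1209.2012 — 2 statements merged into one kernel-verified Lean document; each statement's English description precedes it below -/
import Mathlib

section
/- The abstract Hoare frame rule holds: for all languages F, P, Q, R over an arbitrary alphabet, if P;Q ⊆ R then (F ∥ P);Q ⊆ F ∥ R. -/
def interleave {α : Type*} : List α → List α → Set (List α)
  | [], q => {q}
  | p, [] => {p}
  | e :: p, e' :: q =>
      (e :: ·) '' interleave p (e' :: q) ∪ (e' :: ·) '' interleave (e :: p) q
termination_by p q => p.length + q.length

def shuffle {α : Type*} (P Q : Set (List α)) : Set (List α) :=
  ⋃ p ∈ P, ⋃ q ∈ Q, interleave p q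

def lskip {α : Type*} : Set (List α) := {[]}

def cat {α : Type*} (P Q : Set (List α)) : Set (List α) :=
  {w | ∃ p ∈ P, ∃ q ∈ Q, w = p ++ q}

lemma append_mem_interleave {α : Type*} : ∀ (f q : List α), f ++ q ∈ interleave f q
  | [], q => by simp [interleave]
  | e :: f, [] => by simp [interleave]
  | e :: f, e' :: q => by
      rw [interleave]
      left
      exact ⟨f ++ e' :: q, append_mem_interleave f (e' :: q), rfl⟩

lemma mem_interleave_append {α : Type*} :
    ∀ (f p : List α) (q w : List α), w ∈ interleave f p → w ++ q ∈ interleave f (p ++ q)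
  | [], p, q, w => by
      intro hw
      simp [interleave] at hw ⊢
      subst hw; rfl
  | e :: f, [], q, w => by
      intro hw
      simp only [interleave, Set.mem_singleton_iff] at hw
      subst hw
      simpa using append_mem_interleave (e :: f) q
  | e :: f, e' :: p, q, w => by
      intro hw
      rw [interleave] at hw
      rcases hw with ⟨v, hv, rfl⟩ | ⟨v, hv, rfl⟩
      · rw [List.cons_append, interleave]
        exact Or.inl ⟨v ++ q, mem_interleave_append f (e' :: p) q v hv, rfl⟩
      · rw [List.cons_append, interleave]
        exact Or.inr ⟨v ++ q, mem_interleave_append (e :: f) p q v hv, rfl⟩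
termination_by f p => f.length + p.length

theorem hoare_frame {α : Type*} (F P Q R : Set (List α)) (h : cat P Q ⊆ R) :
    cat (shuffle F P) Q ⊆ shuffle F R := by
  rintro w ⟨r, hr, q, hq, rfl⟩
  simp only [shuffle, Set.mem_iUnion] at hr ⊢
  obtain ⟨f, hf, p, hp, hrfp⟩ := hr
  exact ⟨f, hf, p ++ q, h ⟨p, hp, q, hq, rfl⟩, mem_interleave_append f p q r hrfp⟩
end

section
/- The abstract Hoare concurrency rule holds: for all languages P, Q, R, P', Q', R' over an arbitrary alphabet, if P;Q ⊆ R and P';Q' ⊆ R' then (P ∥ P');(Q ∥ Q') ⊆ R ∥ R'. -/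
lemma interleave_nil_left {α : Type*} (q : List α) : interleave [] q = {q} := by
  cases q <;> rw [interleave]

lemma interleave_nil_right {α : Type*} (p : List α) : interleave p [] = {p} := by
  cases p <;> simp [interleave]

lemma interleave_cons {α : Type*} (e e' : α) (p q : List α) :
    interleave (e :: p) (e' :: q) =
      (e :: ·) '' interleave p (e' :: q) ∪ (e' :: ·) '' interleave (e :: p) q := by
  rw [interleave]

lemma prepend_right {α : Type*} (a : List α) :
    ∀ q q' v : List α, v ∈ interleave q q' → a ++ v ∈ interleave q (a ++ q') := by
  induction a with
  | nil => simp
  | cons x a ih =>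
    intro q q' v hv
    cases q with
    | nil => simp_all [interleave_nil_left]
    | cons e q0 =>
      rw [List.cons_append, interleave_cons]
      exact Or.inr ⟨a ++ v, ih _ _ _ hv, rfl⟩

lemma prepend_left {α : Type*} (a : List α) :
    ∀ q q' v : List α, v ∈ interleave q q' → a ++ v ∈ interleave (a ++ q) q' := by
  induction a with
  | nil => simp
  | cons x a ih =>
    intro q q' v hv
    cases q' with
    | nil => simp_all [interleave_nil_right]
    | cons e q0 =>
      rw [List.cons_append, interleave_cons]
      exact Or.inl ⟨a ++ v, ih _ _ _ hv, rfl⟩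

lemma interleave_append {α : Type*} :
    ∀ p p' w : List α, w ∈ interleave p p' → ∀ q q' v : List α,
      v ∈ interleave q q' → w ++ v ∈ interleave (p ++ q) (p' ++ q') := by
  intro p p'
  induction p, p' using interleave.induct with
  | case1 a =>
    intro w hw q q' v hv
    rw [interleave_nil_left] at hw
    subst hw
    simpa using prepend_right _ q q' v hv
  | case2 b hb =>
    intro w hw q q' v hv
    cases b with
    | nil => simp_all
    | cons e p0 =>
      rw [interleave_nil_right, Set.mem_singleton_iff] at hw
      obtain rfl : w = e :: p0 := hw
      simpa [List.cons_append] using prepend_left (e :: p0) q q' v hv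
  | case3 e p0 e' p0' ih1 ih2 =>
    intro w hw q q' v hv
    rw [interleave_cons] at hw
    rw [List.cons_append, List.cons_append, interleave_cons]
    rcases hw with ⟨r, hr, rfl⟩ | ⟨r, hr, rfl⟩
    · exact Or.inl ⟨r ++ v, by simpa using ih1 r hr q q' v hv, rfl⟩
    · exact Or.inr ⟨r ++ v, by simpa [List.cons_append] using ih2 r hr q q' v hv, rfl⟩

theorem hoare_conc {α : Type*} (P Q R P' Q' R' : Set (List α))
    (h : cat P Q ⊆ R) (h' : cat P' Q' ⊆ R') :
    cat (shuffle P P') (shuffle Q Q') ⊆ shuffle R R' := by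
  rintro w ⟨u, hu, v, hv, rfl⟩
  simp only [shuffle, Set.mem_iUnion] at hu hv ⊢
  obtain ⟨p, hp, p', hp', hup⟩ := hu
  obtain ⟨q, hq, q', hq', hvq⟩ := hv
  exact ⟨p ++ q, h ⟨p, hp, q, hq, rfl⟩, p' ++ q', h' ⟨p', hp', q', hq', rfl⟩,
    interleave_append p p' u hup q q' v hvq⟩
end
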